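/- Let ℕ∞ be the set of nonincreasing binary sequences (f(n) = 1 implies f(m) = 1 for all m < n). For Y : (ℕ → {0,1}) → ℕ, define ε(Y) : ℕ → {0,1} by ε(Y)(n) = 1 if Y(1^k 0 0 …) > 0 for all k ≤ n, and ε(Y)(n) = 0 otherwise. Then ε(Y) ∈ ℕ∞, and (∀ f ∈ ℕ∞, Y(f) > 0) if and only if Y(ε(Y)) > 0. -/
import Mathlib


open Classical in
noncomputable def seqOne (k : ℕ) : ℕ → ℕ := fun n => if n < k then 1 else 0

def Ninf : Set (ℕ → ℕ) :=
  {f | (∀ n, f n ≤ 1) ∧ ∀ n, f n = 1 → ∀ m < n, f m = 1}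

open Classical in
noncomputable def eps (Y : (ℕ → ℕ) → ℕ) : ℕ → ℕ :=
  fun n => if (∀ k ≤ n, Y (seqOne k) > 0) then 1 else 0

lemma ninf_cases {f : ℕ → ℕ} (hf : f ∈ Ninf) :
    (∃ k, f = seqOne k) ∨ f = fun _ => 1 := by
  obtain ⟨hle, hmono⟩ := hf
  by_cases h : ∃ n, f n = 0
  · left
    set n := Nat.find h with hndef
    have hn : f n = 0 := Nat.find_spec h
    have hmin : ∀ m < n, f m ≠ 0 := fun m hm => Nat.find_min h hm
    refine ⟨n, funext fun m => ?_⟩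
    simp only [seqOne]
    split_ifs with hmn
    · have h1 := hmin m hmn
      have := hle m
      omega
    · by_contra hfm
      have hfm1 : f m = 1 := by have := hle m; omega
      have hmn' : n ≤ m := not_lt.1 hmn
      have hne : n ≠ m := fun e => by rw [← e] at hfm1; omega
      have := hmono m hfm1 n (by omega)
      omega
  · right
    push_neg at h
    funext n
    have := hle n; have := h n; omega

theorem escardo_selection (Y : (ℕ → ℕ) → ℕ) :
    eps Y ∈ Ninf ∧ ((∀ f ∈ Ninf, Y f > 0) ↔ Y (eps Y) > 0) := by
  have hmem : eps Y ∈ Ninf := by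
    constructor
    · intro n; unfold eps; split_ifs <;> omega
    · intro n hn m hm
      unfold eps at hn ⊢
      by_cases hc : ∀ k ≤ n, Y (seqOne k) > 0
      · rw [if_pos (fun j hj => hc j (hj.trans hm.le))]
      · rw [if_neg hc] at hn; omega
  refine ⟨hmem, ?_, ?_⟩
  · intro h; exact h _ hmem
  · intro h f hf
    have hall : ∀ k, Y (seqOne k) > 0 := by
      by_contra hc
      push_neg at hc
      have hex : ∃ k, Y (seqOne k) = 0 := by
        obtain ⟨k, hk⟩ := hc; exact ⟨k, by omega⟩
      set k := Nat.find hex with hkdef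
      have hk0 : Y (seqOne k) = 0 := Nat.find_spec hex
      have hkmin : ∀ m < k, Y (seqOne m) ≠ 0 := fun m hm => Nat.find_min hex hm
      have heq : eps Y = seqOne k := by
        funext n
        unfold eps
        by_cases h2 : n < k
        · rw [if_pos (fun j hj => by have := hkmin j (by omega); omega)]
          simp [seqOne, h2]
        · rw [if_neg (fun h1 => by have := h1 k (by omega); omega)]
          simp [seqOne, h2]
      rw [heq] at h
      omega
    rcases ninf_cases hf with ⟨j, rfl⟩ | rfl
    · exact hall j
    · have heq : eps Y = fun _ => 1 := by
        funext n
        unfold eps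
        rw [if_pos (fun j _ => hall j)]
      rwa [heq] at h
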